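/- Determination of the proportionality constant and vanishing of the bilinear traces (core of Corollary 3.2 / Lemma 3.5): let λ_1,…,λ_r ∈ W, a_1,…,a_r ∈ ℝ and Q ∈ ℂ, and suppose Σ_i a_i·F_{λ_i}(t,t') = Q·⟨t',t⟩ for all t,t' ∈ W. Then Q = (1/n)·Σ_i a_i·⟨λ_i,λ_i⟩, and for every normalized orthogonal basis (e_1,…,e_n) one has Σ_i a_i · Σ_{l=1}^{n} ⟨e_l,λ_i⟩² = 0 (the traces of the bilinear forms B_{λ_i}(x,y) = ⟨x,λ_i⟩⟨y,λ_i⟩ cancel). -/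

import Mathlib

open Complex

/-- The form `F_λ(x,y) = ⟨x,λ⟩⟨y,λ⟩ + ⟨λ,x⟩⟨y,λ⟩ (= 2Re(⟨x,λ⟩)·⟨y,λ⟩)`. -/
noncomputable def Fform {W : Type*} [AddCommGroup W] [Module ℂ W]
    (B : W →ₗ[ℂ] W →ₛₗ[starRingEnd ℂ] ℂ) (lam x y : W) : ℂ :=
  B x lam * B y lam + B lam x * B y lam

/-!
Replacing `t` by `I • t` in the hypothesis shows that the part of `Σᵢ aᵢ F_{λᵢ}(t,t')` which is
ℂ-linear in `t`, namely `Σᵢ aᵢ ⟨t,λᵢ⟩⟨t',λᵢ⟩`, vanishes identically, since everything else is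
conjugate-linear in `t`. Evaluating at `t = t' = eₗ` and summing over `l` gives the vanishing of the
traces. For the constant, sum the hypothesis over `t = t' = eₗ` for an orthonormal basis of `-⟨·,·⟩`:
the right side is `-n Q`, and by Parseval the conjugate-linear part contributes `-Σᵢ aᵢ⟨λᵢ,λᵢ⟩`.
-/

section

variable {W : Type*} [AddCommGroup W] [Module ℂ W]

theorem LinearMap.eq_zero_of_forall_eq_conjLinear (f : W →ₗ[ℂ] ℂ) (g : W →ₗ⋆[ℂ] ℂ)
    (h : ∀ w, f w = g w) : f = 0 := by
  ext w
  have hI : I * f w = -I * f w := by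
    rw [← smul_eq_mul, ← f.map_smul, h, g.map_smulₛₗ, h, conj_I, smul_eq_mul]
  simpa [I_ne_zero] using (by linear_combination hI : 2 * I * f w = 0)

variable (B : W →ₗ[ℂ] W →ₛₗ[starRingEnd ℂ] ℂ)

theorem sum_mul_form_mul_form_eq_zero {ι : Type*} [Fintype ι] {lam : ι → W} {c : ι → ℂ} {Q : ℂ}
    (hQ : ∀ t t' : W, ∑ i, c i * Fform B (lam i) t t' = Q * B t' t) (t t' : W) :
    ∑ i, c i * (B t (lam i) * B t' (lam i)) = 0 := by
  let f : W →ₗ[ℂ] ℂ := ∑ i, (c i * B t' (lam i)) • B.flip (lam i)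
  let g : W →ₗ⋆[ℂ] ℂ := Q • B t' - ∑ i, (c i * B t' (lam i)) • B (lam i)
  have hfg : ∀ w, f w = g w := by
    intro w
    simp only [f, g, LinearMap.sub_apply, LinearMap.smul_apply, LinearMap.sum_apply,
      LinearMap.flip_apply, smul_eq_mul, eq_sub_iff_add_eq,
      ← Finset.sum_add_distrib, ← hQ w t', Fform]
    exact Finset.sum_congr rfl fun i _ => by ring
  simpa [f, mul_comm, mul_left_comm] using
    LinearMap.congr_fun (LinearMap.eq_zero_of_forall_eq_conjLinear f g hfg) t

theorem sum_mul_sum_sq_form_eq_zero {ι κ : Type*} [Fintype ι] [Fintype κ] {lam : ι → W}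
    {c : ι → ℂ} {Q : ℂ} (hQ : ∀ t t' : W, ∑ i, c i * Fform B (lam i) t t' = Q * B t' t)
    (e : κ → W) : ∑ i, c i * ∑ l, (B (e l) (lam i)) ^ 2 = 0 := by
  simp_rw [Finset.mul_sum, sq]
  rw [Finset.sum_comm]
  exact Finset.sum_eq_zero fun l _ => sum_mul_form_mul_form_eq_zero B hQ (e l) (e l)

variable {B}

/-- The arguments are swapped because Mathlib's inner product is conjugate-linear in its first
argument. -/
noncomputable abbrev innerProductCoreOfNegDef (hherm : ∀ v w : W, B w v = starRingEnd ℂ (B v w))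
    (hneg : ∀ w : W, w ≠ 0 → (B w w).re < 0) : InnerProductSpace.Core ℂ W where
  inner x y := -B y x
  conj_inner_symm x y := by simp [hherm x y]
  re_inner_nonneg x := by
    rcases eq_or_ne x 0 with rfl | hx
    · simp
    · simpa using (hneg x hx).le
  definite x hx := by
    by_contra h
    simpa [neg_eq_zero.mp hx] using hneg x h
  add_left x y z := by rw [map_add, neg_add_rev, add_comm]
  smul_left x y r := by simp [mul_comm]

theorem exists_orthonormal_sum_form_mul_form_eq_neg [FiniteDimensional ℂ W]
    (hherm : ∀ v w : W, B w v = starRingEnd ℂ (B v w))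
    (hneg : ∀ w : W, w ≠ 0 → (B w w).re < 0) :
    ∃ e : Fin (Module.finrank ℂ W) → W, (∀ l, B (e l) (e l) = -1) ∧
      ∀ v w, ∑ l, B v (e l) * B (e l) w = -B v w := by
  let core := innerProductCoreOfNegDef hherm hneg
  let _ : NormedAddCommGroup W := core.toNormedAddCommGroup
  let _ : InnerProductSpace ℂ W := InnerProductSpace.ofCore core.toCore
  have inner_eq (x y : W) : inner ℂ x y = -B y x := rfl
  let b := stdOrthonormalBasis ℂ W
  refine ⟨b, fun l => ?_, fun v w => ?_⟩
  · have h := orthonormal_iff_ite.mp b.orthonormal l l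
    rw [if_pos rfl, inner_eq] at h
    exact neg_eq_iff_eq_neg.mp h
  · simpa [inner_eq, mul_comm] using b.sum_inner_mul_inner w v

theorem mul_card_eq_sum_mul_form_self {ι κ : Type*} [Fintype ι] [Fintype κ] {lam : ι → W}
    {c : ι → ℂ} {Q : ℂ} (hQ : ∀ t t' : W, ∑ i, c i * Fform B (lam i) t t' = Q * B t' t)
    (e : κ → W) (he : ∀ l, B (e l) (e l) = -1)
    (hparseval : ∀ v, ∑ l, B v (e l) * B (e l) v = -B v v) :
    Q * Fintype.card κ = ∑ i, c i * B (lam i) (lam i) := by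
  have hsum : ∑ l, ∑ i, c i * Fform B (lam i) (e l) (e l) = -(Q * Fintype.card κ) := by
    simp [hQ, he, mul_comm]
  have hsplit : ∑ l, ∑ i, c i * Fform B (lam i) (e l) (e l)
      = ∑ i, c i * ∑ l, (B (e l) (lam i)) ^ 2
        + ∑ i, c i * ∑ l, B (lam i) (e l) * B (e l) (lam i) := by
    simp only [Fform, Finset.mul_sum, ← Finset.sum_add_distrib]
    rw [Finset.sum_comm]
    exact Finset.sum_congr rfl fun i _ => Finset.sum_congr rfl fun l _ => by ring
  rw [hsplit, sum_mul_sum_sq_form_eq_zero B hQ e] at hsum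
  simpa [hparseval, Finset.sum_neg_distrib] using hsum.symm

end

/-- Determination of the proportionality constant and vanishing of the bilinear
traces: if `Σᵢ aᵢ·F_{λᵢ}(t,t') = Q·⟨t',t⟩` for all `t,t'`, then
`Q = (1/n)·Σᵢ aᵢ·⟨λᵢ,λᵢ⟩`, and for every normalized orthogonal basis the traces
of the bilinear forms `B_{λᵢ}` cancel: `Σᵢ aᵢ·Σₗ ⟨eₗ,λᵢ⟩² = 0`. -/
theorem proportionality_constant_and_trace {W : Type*} [AddCommGroup W]
    [Module ℂ W] [FiniteDimensional ℂ W]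
    (n : ℕ) (hn : 1 ≤ n) (hdim : Module.finrank ℂ W = n)
    (B : W →ₗ[ℂ] W →ₛₗ[starRingEnd ℂ] ℂ)
    (hherm : ∀ v w : W, B w v = starRingEnd ℂ (B v w))
    (hneg : ∀ w : W, w ≠ 0 → (B w w).re < 0)
    (r : ℕ) (lam : Fin r → W) (a : Fin r → ℝ) (Q : ℂ)
    (hQ : ∀ t t' : W, ∑ i, (a i : ℂ) * Fform B (lam i) t t' = Q * B t' t) :
    Q = (1 / (n : ℂ)) * ∑ i, (a i : ℂ) * B (lam i) (lam i)
      ∧ ∀ e : Module.Basis (Fin n) ℂ W,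
          (∀ i j, B (e i) (e j) = if i = j then -1 else 0) →
          ∑ i, (a i : ℂ) * ∑ l, (B (e l) (lam i)) ^ 2 = 0 := by
  refine ⟨?_, fun e _ => sum_mul_sum_sq_form_eq_zero B hQ e⟩
  subst hdim
  obtain ⟨e, he, hparseval⟩ := exists_orthonormal_sum_form_mul_form_eq_neg hherm hneg
  have hQn := mul_card_eq_sum_mul_form_self hQ e he fun v => hparseval v v
  rw [Fintype.card_fin] at hQn
  have hn0 : (Module.finrank ℂ W : ℂ) ≠ 0 := Nat.cast_ne_zero.mpr (by omega)
  rw [← hQn]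
  field_simp
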